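/- Let F : ℝⁿ → ℝ be convex and differentiable, χ : ℝⁿ → ℝ convex, C ⊆ ℝⁿ a convex set, H a symmetric positive definite n×n real matrix, and t > 0. Suppose u* minimizes F + χ over C, and u⁺ minimizes z ↦ (1/(2t))‖z − (u − t H⁻¹ ∇F(u))‖²_H + χ(z) over C for some u ∈ ℝⁿ. Then ‖u⁺ − u*‖_H ≤ ‖u − u* − t H⁻¹(∇F(u) − ∇F(u*))‖_H. -/

import Mathlib

open Matrix

/-- The squared `H`-norm `‖x‖²_H = xᵀ H x` on Euclidean space. -/
noncomputable def hNormSq {n : ℕ} (H : Matrix (Fin n) (Fin n) ℝ)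
    (x : EuclideanSpace ℝ (Fin n)) : ℝ :=
  inner ℝ x (Matrix.toEuclideanLin H x)

/-- The `H`-norm `‖x‖_H = (xᵀ H x)^{1/2}` on Euclidean space. -/
noncomputable def hNorm {n : ℕ} (H : Matrix (Fin n) (Fin n) ℝ)
    (x : EuclideanSpace ℝ (Fin n)) : ℝ :=
  Real.sqrt (hNormSq H x)

open Set
open scoped RealInnerProductSpace

/-! Both `u*` and `u⁺` minimize a differentiable function plus the convex `χ` over `C`, so each
satisfies the first-order variational inequality `0 ≤ f'(z - x) + χ z - χ x` for `z ∈ C`.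
Testing the one at `u*` with `u⁺`, the one at `u⁺` with `u*`, and adding them, the `χ` terms
cancel and what remains is `⟪a, H a⟫ ≤ ⟪a, H b⟫` for `a = u⁺ - u*` and
`b = u - u* - t H⁻¹ (∇F(u) - ∇F(u*))`. Since `H` is positive semidefinite,
`0 ≤ ⟪a - b, H (a - b)⟫` then gives `⟪a, H a⟫ ≤ ⟪b, H b⟫`. -/

theorem IsMinOn.fderiv_add_sub_nonneg_of_convexOn {E : Type*} [NormedAddCommGroup E]
    [NormedSpace ℝ E] {f χ : E → ℝ} {f' : E →L[ℝ] ℝ} {C : Set E} {x z : E}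
    (hmin : IsMinOn (f + χ) C x) (hf : HasFDerivAt f f' x) (hχ : ConvexOn ℝ C χ)
    (hx : x ∈ C) (hz : z ∈ C) :
    0 ≤ f' (z - x) + (χ z - χ x) := by
  set φ : ℝ → ℝ := fun s => f (x + s • (z - x)) + s * (χ z - χ x)
  have hφ : HasDerivAt φ (f' (z - x) + (χ z - χ x)) 0 := by
    have hline : HasDerivAt (fun s : ℝ => x + s • (z - x)) (z - x) 0 := by
      simpa using ((hasDerivAt_id (0 : ℝ)).smul_const (z - x)).const_add x
    have hf0 : HasFDerivAt f f' (x + (0 : ℝ) • (z - x)) := by simpa using hf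
    have h := (hf0.comp_hasDerivAt 0 hline).add ((hasDerivAt_id (0 : ℝ)).mul_const (χ z - χ x))
    simp only [id, one_mul] at h
    exact h
  have hφmin : IsMinOn φ (Icc 0 1) 0 := by
    refine isMinOn_iff.mpr fun s ⟨hs0, hs1⟩ => ?_
    have hseg : x + s • (z - x) = (1 - s) • x + s • z := by module
    have hmem : x + s • (z - x) ∈ C := hseg ▸ hχ.1 hx hz (by linarith) hs0 (by ring)
    have hconv : χ (x + s • (z - x)) ≤ (1 - s) • χ x + s • χ z :=
      hseg ▸ hχ.2 hx hz (by linarith) hs0 (by ring)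
    have := isMinOn_iff.mp hmin _ hmem
    simp only [Pi.add_apply, smul_eq_mul] at this hconv
    simp only [φ, zero_smul, add_zero, zero_mul]
    linarith
  have hcone : (1 : ℝ) - 0 ∈ posTangentConeAt (Icc (0 : ℝ) 1) 0 :=
    sub_mem_posTangentConeAt_of_segment_subset (segment_eq_Icc zero_le_one).subset
  simpa using hφmin.localize.hasFDerivWithinAt_nonneg hφ.hasFDerivAt.hasFDerivWithinAt hcone

theorem LinearMap.IsSymmetric.hasFDerivAt_inner_sub_map_sub {E : Type*}
    [NormedAddCommGroup E] [InnerProductSpace ℝ E] [FiniteDimensional ℝ E]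
    {T : E →ₗ[ℝ] E} (hT : T.IsSymmetric) (v x : E) :
    HasFDerivAt (fun y => ⟪y - v, T (y - v)⟫) ((2 : ℝ) • innerSL ℝ (T (x - v))) x := by
  have hsub : HasFDerivAt (fun y : E => y - v) (ContinuousLinearMap.id ℝ E) x :=
    hasFDerivAt_sub_const v
  have hT' := (LinearMap.toContinuousLinearMap T).hasFDerivAt.comp x hsub
  have h : HasFDerivAt (fun y => ⟪y - v, T (y - v)⟫) _ x := hsub.inner ℝ hT'
  refine h.congr_fderiv ?_
  ext d
  have hsymm : ⟪x - v, T d⟫ = ⟪d, T (x - v)⟫ := by rw [real_inner_comm, hT]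
  simp [hsymm, two_smul, real_inner_comm _ d, inner_sub_left]

theorem LinearMap.IsPositive.inner_map_self_le_of_inner_map_self_le {E : Type*}
    [NormedAddCommGroup E] [InnerProductSpace ℝ E] {T : E →ₗ[ℝ] E} (hT : T.IsPositive)
    {a b : E} (h : ⟪a, T a⟫ ≤ ⟪a, T b⟫) : ⟪a, T a⟫ ≤ ⟪b, T b⟫ := by
  have hnonneg := hT.inner_nonneg_right (a - b)
  have hsymm : ⟪b, T a⟫ = ⟪a, T b⟫ := by rw [← hT.isSymmetric, real_inner_comm]
  simp only [map_sub, inner_sub_left, inner_sub_right] at hnonneg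
  linarith

theorem IsMinOn.inner_sub_map_sub_le_of_convexOn {E : Type*} [NormedAddCommGroup E]
    [InnerProductSpace ℝ E] [FiniteDimensional ℝ E] {T : E →ₗ[ℝ] E} (hT : T.IsSymmetric)
    {χ : E → ℝ} {C : Set E} {t : ℝ} (ht : 0 < t) {v x z : E}
    (hmin : IsMinOn ((fun y => 1 / (2 * t) * ⟪y - v, T (y - v)⟫) + χ) C x)
    (hχ : ConvexOn ℝ C χ) (hx : x ∈ C) (hz : z ∈ C) :
    ⟪x - z, T (x - v)⟫ ≤ t * (χ z - χ x) := by
  have hq := (hT.hasFDerivAt_inner_sub_map_sub v x).const_mul (1 / (2 * t))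
  have h := hmin.fderiv_add_sub_nonneg_of_convexOn hq hχ hx hz
  rw [← neg_sub x z] at h
  simp only [_root_.smul_apply, innerSL_apply_apply, smul_eq_mul, inner_neg_right,
    real_inner_comm (x - z)] at h
  field_simp at h
  linarith

theorem Matrix.toEuclideanLin_apply_toEuclideanLin_inv {n : Type*} [Fintype n] [DecidableEq n]
    {H : Matrix n n ℝ} (hH : IsUnit H.det) (x : EuclideanSpace ℝ n) :
    toEuclideanLin H (toEuclideanLin H⁻¹ x) = x := by
  simp [Matrix.toLpLin_apply, Matrix.mulVec_mulVec, Matrix.mul_nonsing_inv H hH]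

theorem prox_gradient_step_estimate_general (n : ℕ)
    (F : EuclideanSpace ℝ (Fin n) → ℝ)
    (hFdiff : Differentiable ℝ F)
    (χ : EuclideanSpace ℝ (Fin n) → ℝ) (hχ : ConvexOn ℝ Set.univ χ)
    (C : Set (EuclideanSpace ℝ (Fin n))) (hC : Convex ℝ C)
    (H : Matrix (Fin n) (Fin n) ℝ) (hH : H.PosDef)
    (t : ℝ) (ht : 0 < t)
    (ustar : EuclideanSpace ℝ (Fin n)) (hustarC : ustar ∈ C)
    (hustar : ∀ z ∈ C, F ustar + χ ustar ≤ F z + χ z)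
    (u uplus : EuclideanSpace ℝ (Fin n)) (huplusC : uplus ∈ C)
    (huplus : ∀ z ∈ C,
      (1 / (2 * t)) * hNormSq H
          (uplus - (u - t • Matrix.toEuclideanLin H⁻¹ (gradient F u))) + χ uplus ≤
        (1 / (2 * t)) * hNormSq H
          (z - (u - t • Matrix.toEuclideanLin H⁻¹ (gradient F u))) + χ z) :
    hNorm H (uplus - ustar) ≤
      hNorm H (u - ustar -
        t • Matrix.toEuclideanLin H⁻¹ (gradient F u - gradient F ustar)) := by
  set L := toEuclideanLin H
  set v := u - t • toEuclideanLin H⁻¹ (gradient F u)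
  have hL : L.IsPositive := isPositive_toEuclideanLin_iff.mpr hH.posSemidef
  have hχC : ConvexOn ℝ C χ := hχ.subset (subset_univ C) hC
  set a := uplus - ustar
  set b := u - ustar - t • toEuclideanLin H⁻¹ (gradient F u - gradient F ustar)
  have hopt_star : 0 ≤ ⟪a, gradient F ustar⟫ + (χ uplus - χ ustar) := by
    have h := IsMinOn.fderiv_add_sub_nonneg_of_convexOn (isMinOn_iff.mpr hustar)
      (hFdiff ustar).hasGradientAt.hasFDerivAt hχC hustarC huplusC
    rwa [InnerProductSpace.toDual_apply_apply, real_inner_comm] at h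
  have hopt_plus : ⟪a, L (uplus - v)⟫ ≤ t * (χ ustar - χ uplus) :=
    IsMinOn.inner_sub_map_sub_le_of_convexOn hL.isSymmetric ht (isMinOn_iff.mpr huplus) hχC
      huplusC hustarC
  have hLb : L b = L a - L (uplus - v) + t • gradient F ustar := by
    have hHdet : IsUnit H.det := hH.isUnit.map detMonoidHom
    simp only [L, b, a, v, map_sub, map_smul, toEuclideanLin_apply_toEuclideanLin_inv hHdet]
    module
  have hkey : ⟪a, L a⟫ ≤ ⟪a, L b⟫ := by
    rw [hLb, inner_add_right, inner_sub_right, real_inner_smul_right]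
    linarith [mul_nonneg ht.le hopt_star]
  exact Real.sqrt_le_sqrt (hL.inner_map_self_le_of_inner_map_self_le hkey)

/-- Let `F` be convex and differentiable, `χ` convex, `C` convex, `H` symmetric positive
definite, `t > 0`. If `u*` minimizes `F + χ` over `C` and `u⁺` minimizes
`z ↦ (1/(2t))‖z − (u − t H⁻¹ ∇F(u))‖²_H + χ(z)` over `C`, then
`‖u⁺ − u*‖_H ≤ ‖u − u* − t H⁻¹(∇F(u) − ∇F(u*))‖_H`. -/
theorem prox_gradient_step_estimate (n : ℕ)
    (F : EuclideanSpace ℝ (Fin n) → ℝ)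
    (hF : ConvexOn ℝ Set.univ F) (hFdiff : Differentiable ℝ F)
    (χ : EuclideanSpace ℝ (Fin n) → ℝ) (hχ : ConvexOn ℝ Set.univ χ)
    (C : Set (EuclideanSpace ℝ (Fin n))) (hC : Convex ℝ C)
    (H : Matrix (Fin n) (Fin n) ℝ) (hH : H.PosDef)
    (t : ℝ) (ht : 0 < t)
    (ustar : EuclideanSpace ℝ (Fin n)) (hustarC : ustar ∈ C)
    (hustar : ∀ z ∈ C, F ustar + χ ustar ≤ F z + χ z)
    (u uplus : EuclideanSpace ℝ (Fin n)) (huplusC : uplus ∈ C)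
    (huplus : ∀ z ∈ C,
      (1 / (2 * t)) * hNormSq H
          (uplus - (u - t • Matrix.toEuclideanLin H⁻¹ (gradient F u))) + χ uplus ≤
        (1 / (2 * t)) * hNormSq H
          (z - (u - t • Matrix.toEuclideanLin H⁻¹ (gradient F u))) + χ z) :
    hNorm H (uplus - ustar) ≤
      hNorm H (u - ustar -
        t • Matrix.toEuclideanLin H⁻¹ (gradient F u - gradient F ustar)) :=
  prox_gradient_step_estimate_general n F hFdiff χ hχ C hC H hH t ht ustar hustarC hustar u uplus
    huplusC huplus
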